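/- Let f, g : ℂ × ℂ → ℂ be smooth functions whose supports are compact and contained in ℂ × (ℂ∖{0}). Then ∫ (Y f)(z,y)·g(z,y)·|y|⁻⁴ dλ(z,y) = ∫ f(z,y)·(g(z,y) − (Y g)(z,y))·|y|⁻⁴ dλ(z,y), where λ is Lebesgue measure on ℂ × ℂ ≅ ℝ⁴. (This integration-by-parts identity against the invariant volume |y|⁻⁴dλ realizes the value δ(Y) = 1 of the modular character δ of the Hopf algebra, entering the twisted antipode S̃.) -/

import Mathlib

open MeasureTheory

/-- First-variable Wirtinger derivative ∂₁F(p) = ½(DF(p)(e₁) − i·DF(p)(i·e₁)) for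
F : ℂ × ℂ → ℂ, where DF(p) is the real Fréchet derivative of F at p. -/
noncomputable def wirt1 (F : ℂ × ℂ → ℂ) (p : ℂ × ℂ) : ℂ :=
  (1 / 2 : ℂ) * (fderiv ℝ F p (1, 0) - Complex.I * fderiv ℝ F p (Complex.I, 0))

/-- Second-variable Wirtinger derivative ∂₂F(p) = ½(DF(p)(e₂) − i·DF(p)(i·e₂)). -/
noncomputable def wirt2 (F : ℂ × ℂ → ℂ) (p : ℂ × ℂ) : ℂ :=
  (1 / 2 : ℂ) * (fderiv ℝ F p (0, 1) - Complex.I * fderiv ℝ F p (0, Complex.I))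

/-- The operator (X F)(z,y) = y·∂₁F(z,y). -/
noncomputable def Xop (F : ℂ × ℂ → ℂ) : ℂ × ℂ → ℂ := fun p => p.2 * wirt1 F p

/-- The operator (Y F)(z,y) = y·∂₂F(z,y). -/
noncomputable def Yop (F : ℂ × ℂ → ℂ) : ℂ × ℂ → ℂ := fun p => p.2 * wirt2 F p

/-!
Integrating by parts in the second variable, the identity says `∫ ∂₂H = 0` for
`H = f · g · y|y|⁻⁴`, which is smooth with compact support because `f` and `g` vanish near
`y = 0`. Writing `y|y|⁻⁴ = conj(y²)⁻¹ · y⁻¹` as an antiholomorphic times a holomorphic function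
of `y` gives `∂₂(y|y|⁻⁴) = -|y|⁻⁴`, so the product rule turns `∂₂H` into
`(Y f · g + f · Y g - f · g) |y|⁻⁴`.
-/

open Complex ComplexConjugate

theorem ContDiff.mul_of_tsupport_subset {𝕜 E A : Type*} [NontriviallyNormedField 𝕜]
    [NormedAddCommGroup E] [NormedSpace 𝕜 E] [NormedRing A] [NormedAlgebra 𝕜 A]
    {n : WithTop ℕ∞} {u v : E → A} {U : Set E} (hU : IsOpen U) (hu : ContDiff 𝕜 n u)
    (hv : ContDiffOn 𝕜 n v U) (hsupp : tsupport u ⊆ U) :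
    ContDiff 𝕜 n fun x => u x * v x := by
  refine contDiff_iff_contDiffAt.2 fun x => ?_
  by_cases hx : x ∈ U
  · exact hu.contDiffAt.mul (hv.contDiffAt (hU.mem_nhds hx))
  · have hu0 : u =ᶠ[nhds x] 0 := notMem_tsupport_iff_eventuallyEq.1 fun h => hx (hsupp h)
    refine contDiffAt_const (c := (0 : A)).congr_of_eventuallyEq ?_
    filter_upwards [hu0] with y hy
    simp [hy]

theorem integral_fderiv_apply_eq_zero {E F : Type*} [NormedAddCommGroup E] [NormedSpace ℝ E]
    [FiniteDimensional ℝ E] [MeasurableSpace E] [BorelSpace E] {μ : Measure E}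
    [μ.IsAddHaarMeasure] [NormedAddCommGroup F] [NormedSpace ℝ F] {H : E → F}
    (hH : ContDiff ℝ 1 H) (hHc : HasCompactSupport H) (v : E) :
    ∫ x, fderiv ℝ H x v ∂μ = 0 := by
  have := integral_smul_fderiv_eq_neg_fderiv_smul_of_integrable (μ := μ)
    (f := fun _ => (1 : ℝ)) (g := H) (v := v) (by simp)
    (by simpa using ((hH.continuous_fderiv one_ne_zero).clm_apply continuous_const
      ).integrable_of_hasCompactSupport (hHc.fderiv_apply (𝕜 := ℝ) v))
    (by simpa using hH.continuous.integrable_of_hasCompactSupport hHc)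
    (fun _ _ => differentiableAt_const _) (fun x _ => hH.differentiable one_ne_zero x)
  simpa using this

instance : (volume : Measure (ℂ × ℂ)).IsAddHaarMeasure :=
  inferInstanceAs ((volume : Measure ℂ).prod volume).IsAddHaarMeasure

theorem wirt2_mul {A B : ℂ × ℂ → ℂ} {p : ℂ × ℂ} (hA : DifferentiableAt ℝ A p)
    (hB : DifferentiableAt ℝ B p) :
    wirt2 (fun q => A q * B q) p = wirt2 A p * B p + A p * wirt2 B p := by
  simp only [wirt2, fderiv_fun_mul hA hB, add_apply, smul_apply, smul_eq_mul]
  ring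

theorem wirt2_comp_snd {h : ℂ → ℂ} {p : ℂ × ℂ} (hh : DifferentiableAt ℂ h p.2) :
    wirt2 (fun q => h q.2) p = deriv h p.2 := by
  have hd : HasFDerivAt (fun q : ℂ × ℂ => h q.2)
      ((((1 : ℂ →L[ℂ] ℂ).smulRight (deriv h p.2)).restrictScalars ℝ).comp
        (ContinuousLinearMap.snd ℝ ℂ ℂ)) p :=
    (hh.hasDerivAt.hasFDerivAt.restrictScalars ℝ).comp p hasFDerivAt_snd
  have h1 : fderiv ℝ (fun q : ℂ × ℂ => h q.2) p (0, 1) = deriv h p.2 := by simp [hd.fderiv]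
  have hI : fderiv ℝ (fun q : ℂ × ℂ => h q.2) p (0, I) = I * deriv h p.2 := by
    simp [hd.fderiv]
  rw [wirt2, h1, hI]
  linear_combination (-2⁻¹ * deriv h p.2) * I_mul_I

theorem wirt2_conj_comp_snd {h : ℂ → ℂ} {p : ℂ × ℂ} (hh : DifferentiableAt ℂ h p.2) :
    wirt2 (fun q => conj (h q.2)) p = 0 := by
  have hd : HasFDerivAt (fun q : ℂ × ℂ => conj (h q.2))
      (conjCLE.toContinuousLinearMap.comp
        ((((1 : ℂ →L[ℂ] ℂ).smulRight (deriv h p.2)).restrictScalars ℝ).comp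
          (ContinuousLinearMap.snd ℝ ℂ ℂ))) p :=
    conjCLE.hasFDerivAt.comp p
      ((hh.hasDerivAt.hasFDerivAt.restrictScalars ℝ).comp p hasFDerivAt_snd)
  have h1 : fderiv ℝ (fun q : ℂ × ℂ => conj (h q.2)) p (0, 1) = conj (deriv h p.2) := by
    simp [hd.fderiv]
  have hI : fderiv ℝ (fun q : ℂ × ℂ => conj (h q.2)) p (0, I) = -I * conj (deriv h p.2) := by
    simp [hd.fderiv]
  rw [wirt2, h1, hI]
  linear_combination 2⁻¹ * conj (deriv h p.2) * I_mul_I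

theorem integral_wirt2_eq_zero {H : ℂ × ℂ → ℂ} (hH : ContDiff ℝ 1 H)
    (hHc : HasCompactSupport H) : ∫ p, wirt2 H p = 0 := by
  have hint (v : ℂ × ℂ) : Integrable (fderiv ℝ H · v) :=
    ((hH.continuous_fderiv one_ne_zero).clm_apply
      continuous_const).integrable_of_hasCompactSupport (hHc.fderiv_apply (𝕜 := ℝ) v)
  simp only [wirt2]
  rw [integral_const_mul, integral_sub (hint _) ((hint _).const_mul _), integral_const_mul,
    integral_fderiv_apply_eq_zero hH hHc, integral_fderiv_apply_eq_zero hH hHc]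
  simp

theorem continuous_Yop {F : ℂ × ℂ → ℂ} (hF : ContDiff ℝ 1 F) : Continuous (Yop F) := by
  have hc (v : ℂ × ℂ) : Continuous (fderiv ℝ F · v) :=
    (hF.continuous_fderiv one_ne_zero).clm_apply continuous_const
  unfold Yop wirt2
  fun_prop

-- Since `(0 : ℝ)⁻¹ = 0`, the weight vanishes at `y = 0` and the identities below hold there too.
noncomputable def invariantWeight (p : ℂ × ℂ) : ℂ := ((‖p.2‖ ^ 4)⁻¹ : ℝ)

theorem invariantWeight_eq (p : ℂ × ℂ) : invariantWeight p = conj (p.2 ^ 2)⁻¹ * (p.2 ^ 2)⁻¹ := by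
  rw [invariantWeight, ofReal_inv, map_inv₀, ← mul_inv, mul_comm (conj _), mul_conj', norm_pow]
  push_cast
  ring

theorem snd_mul_invariantWeight (p : ℂ × ℂ) :
    p.2 * invariantWeight p = conj (p.2 ^ 2)⁻¹ * p.2⁻¹ := by
  rw [invariantWeight_eq]
  rcases eq_or_ne p.2 0 with h | h
  · simp [h]
  · field_simp

theorem invariantWeight_of_snd_eq_zero {p : ℂ × ℂ} (h : p.2 = 0) : invariantWeight p = 0 := by
  simp [invariantWeight, h]

theorem contDiffOn_invariantWeight {n : WithTop ℕ∞} :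
    ContDiffOn ℝ n invariantWeight {p | p.2 ≠ 0} := by
  intro p hp
  have hnorm : ContDiffAt ℝ n (fun q : ℂ × ℂ => ‖q.2‖ ^ 4) p :=
    ((contDiffAt_norm ℝ hp).comp p contDiffAt_snd).pow 4
  exact (ofRealCLM.contDiff.comp_contDiffAt p
    (hnorm.inv (pow_ne_zero 4 (norm_ne_zero_iff.2 hp)))).contDiffWithinAt

theorem wirt2_snd_mul_invariantWeight {p : ℂ × ℂ} (hp : p.2 ≠ 0) :
    wirt2 (fun q => q.2 * invariantWeight q) p = -invariantWeight p := by
  have hinv : DifferentiableAt ℂ (fun y : ℂ => y⁻¹) p.2 := differentiableAt_inv hp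
  have hinv2 : DifferentiableAt ℂ (fun y : ℂ => (y ^ 2)⁻¹) p.2 :=
    (differentiableAt_pow 2).inv (pow_ne_zero 2 hp)
  simp only [snd_mul_invariantWeight]
  rw [wirt2_mul, wirt2_conj_comp_snd hinv2, wirt2_comp_snd hinv, deriv_inv, invariantWeight_eq]
  · ring
  · exact conjCLE.differentiableAt.comp p
      ((hinv2.restrictScalars ℝ).comp p differentiableAt_snd)
  · exact (hinv.restrictScalars ℝ).comp p differentiableAt_snd

theorem isOpen_snd_ne_zero : IsOpen {p : ℂ × ℂ | p.2 ≠ 0} :=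
  isOpen_ne_fun continuous_snd continuous_const

theorem integrable_mul_invariantWeight {u : ℂ × ℂ → ℂ} (hu : Continuous u)
    (huc : HasCompactSupport u) (hus : tsupport u ⊆ {p | p.2 ≠ 0}) :
    Integrable fun p => u p * invariantWeight p :=
  (contDiff_zero.1 ((contDiff_zero.2 hu).mul_of_tsupport_subset isOpen_snd_ne_zero
    contDiffOn_invariantWeight hus)).integrable_of_hasCompactSupport huc.mul_right

theorem wirt2_mul_mul_snd_mul_invariantWeight {f g : ℂ × ℂ → ℂ} (hf : ContDiff ℝ 1 f)
    (hg : ContDiff ℝ 1 g) (hfs : tsupport f ⊆ {p | p.2 ≠ 0}) (p : ℂ × ℂ) :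
    wirt2 (fun q => f q * (g q * (q.2 * invariantWeight q))) p
      = Yop f p * g p * invariantWeight p - f p * (g p - Yop g p) * invariantWeight p := by
  by_cases hp : p.2 = 0
  · have : p ∉ tsupport fun q => f q * (g q * (q.2 * invariantWeight q)) :=
      fun h => hfs (tsupport_mul_subset_left h) hp
    simp [wirt2, fderiv_of_notMem_tsupport ℝ this, invariantWeight_of_snd_eq_zero hp]
  · have hyw : DifferentiableAt ℝ (fun q : ℂ × ℂ => q.2 * invariantWeight q) p :=
      differentiableAt_snd.mul (((contDiffOn_invariantWeight (n := 1)).differentiableOn one_ne_zero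
        ).differentiableAt (isOpen_snd_ne_zero.mem_nhds hp))
    have hf' := hf.differentiable one_ne_zero p
    have hg' := hg.differentiable one_ne_zero p
    rw [wirt2_mul hf' (hg'.fun_mul hyw), wirt2_mul hg' hyw, wirt2_snd_mul_invariantWeight hp]
    simp only [Yop]
    ring

/-- Integration by parts against the invariant volume |y|⁻⁴dλ, realizing δ(Y) = 1:
for smooth compactly supported f, g with supports in ℂ × (ℂ∖{0}),
∫ (Y f)·g·|y|⁻⁴ = ∫ f·(g − Y g)·|y|⁻⁴. -/
theorem stmt10 (f g : ℂ × ℂ → ℂ)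
    (hf : ContDiff ℝ (⊤ : ℕ∞) f) (hg : ContDiff ℝ (⊤ : ℕ∞) g)
    (hfc : HasCompactSupport f) (hgc : HasCompactSupport g)
    (hfs : tsupport f ⊆ (Set.univ : Set ℂ) ×ˢ {y : ℂ | y ≠ 0})
    (hgs : tsupport g ⊆ (Set.univ : Set ℂ) ×ˢ {y : ℂ | y ≠ 0}) :
    ∫ p : ℂ × ℂ, Yop f p * g p * (((‖p.2‖ ^ 4)⁻¹ : ℝ) : ℂ)
      = ∫ p : ℂ × ℂ, f p * (g p - Yop g p) * (((‖p.2‖ ^ 4)⁻¹ : ℝ) : ℂ) := by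
  rw [Set.univ_prod] at hfs hgs
  replace hf : ContDiff ℝ 1 f := hf.of_le (by simp)
  replace hg : ContDiff ℝ 1 g := hg.of_le (by simp)
  have hH : ContDiff ℝ 1 fun q => f q * (g q * (q.2 * invariantWeight q)) :=
    hf.mul (hg.mul_of_tsupport_subset isOpen_snd_ne_zero
      (contDiffOn_snd.mul contDiffOn_invariantWeight) hgs)
  have hA : Integrable fun p => Yop f p * g p * invariantWeight p :=
    integrable_mul_invariantWeight ((continuous_Yop hf).mul hg.continuous) hgc.mul_left
      (tsupport_mul_subset_right.trans hgs)
  have hB : Integrable fun p => f p * (g p - Yop g p) * invariantWeight p :=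
    integrable_mul_invariantWeight (hf.continuous.mul (hg.continuous.sub (continuous_Yop hg)))
      hfc.mul_right (tsupport_mul_subset_left.trans hfs)
  change ∫ p, Yop f p * g p * invariantWeight p = ∫ p, f p * (g p - Yop g p) * invariantWeight p
  rw [← sub_eq_zero, ← integral_sub hA hB, ← integral_wirt2_eq_zero hH hfc.mul_right]
  simp_rw [wirt2_mul_mul_snd_mul_invariantWeight hf hg hfs]
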